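/- arXiv:2012.09651 — 3 statements merged into one kernel-verified Lean document; each statement's English description precedes it below -/
import Mathlib

section
/- For every integer σ with σ ≠ −1 there exists a constant c(σ) > 0 such that for all b, w₁, w₂ ∈ ℂ with w₁ ≠ b and w₂ ≠ b, ∫₀¹ |w₁ + t(w₂ − w₁) − b|^{σ} dt ≥ c(σ) · |w₁ − b|^{σ/2} |w₂ − b|^{σ/2}, where the left-hand side is interpreted as a value in [0, ∞] (it may be infinite when σ < 0 and b lies on the segment). Equivalently, with the line-integral notation ∫_{w₁}^{w₂} f(y) dy := (w₂ − w₁) ∫₀¹ f(w₁ + t(w₂ − w₁)) dt, one has |∫_{w₁}^{w₂} |y − b|^{σ} dy| ≥ c(σ) |w₁ − b|^{σ/2} |w₂ − b|^{σ/2} |w₂ − w₁|. -/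
open MeasureTheory
open scoped ENNReal

/-!
Put `p = w₁ - b` and `q = w₂ - b`, so that the integrand is `|z(t)|^σ` with `z = lineMap p q`.
Wherever `z(t)` stays within `|e|/2` of an endpoint `e ∈ {p, q}`, the ratio `|z(t)|/|e|` lies in
`[1/2, 2]`, so the integrand is at least `2^{-|σ|} |e|^σ`. Assume `|p| ≤ |q|`. For `σ ≥ 0` take
`e = q` on a parameter interval of length `1/4`. For `σ ≤ -2` take `e = p` on an interval of
length `|p| / (4|q|)`; the resulting bound `|p|^{σ+1} / |q|` dominates `|p|^{σ/2} |q|^{σ/2}`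
exactly because `σ/2 + 1 ≤ 0`, which is where `σ = -1` fails.
-/

open Set AffineMap

lemma inv_two_pow_natAbs_le_zpow {y : ℝ} (h₁ : 2⁻¹ ≤ y) (h₂ : y ≤ 2) (σ : ℤ) :
    (2⁻¹ : ℝ) ^ σ.natAbs ≤ y ^ σ := by
  rcases σ with n | n
  · simpa using pow_le_pow_left₀ (by norm_num) h₁ n
  · rw [zpow_negSucc, ← inv_pow]
    exact pow_le_pow_left₀ (by norm_num) (inv_anti₀ (by linarith) h₂) _

lemma inv_two_pow_natAbs_mul_zpow_le {E : Type*} [NormedAddCommGroup E] {p x : E} (hp : p ≠ 0)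
    (hx : ‖x - p‖ ≤ ‖p‖ / 2) (σ : ℤ) :
    (2⁻¹ : ℝ) ^ σ.natAbs * ‖p‖ ^ σ ≤ ‖x‖ ^ σ := by
  have hp' : 0 < ‖p‖ := norm_pos_iff.2 hp
  have hlow : ‖p‖ - ‖x‖ ≤ ‖x - p‖ := by simpa [norm_sub_rev] using norm_sub_norm_le p x
  have hhigh : ‖x‖ - ‖p‖ ≤ ‖x - p‖ := norm_sub_norm_le x p
  have hratio := inv_two_pow_natAbs_le_zpow (y := ‖x‖ / ‖p‖)
    (by rw [le_div_iff₀ hp']; linarith) (by rw [div_le_iff₀ hp']; linarith) σ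
  calc (2⁻¹ : ℝ) ^ σ.natAbs * ‖p‖ ^ σ ≤ (‖x‖ / ‖p‖) ^ σ * ‖p‖ ^ σ := by gcongr
    _ = ‖x‖ ^ σ := by rw [div_zpow, div_mul_cancel₀ _ (zpow_ne_zero _ hp'.ne')]

lemma setLIntegral_Icc_zero_one_comp_one_sub (f : ℝ → ℝ≥0∞) :
    ∫⁻ t in Icc (0 : ℝ) 1, f (1 - t) = ∫⁻ t in Icc (0 : ℝ) 1, f t := by
  have hpre : (fun t : ℝ => 1 - t) ⁻¹' Icc 0 1 = Icc 0 1 := by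
    rw [preimage_const_sub_Icc]; norm_num
  rw [← (Measure.measurePreserving_sub_left volume 1).setLIntegral_comp_preimage_emb
    (MeasurableEquiv.subLeft 1).measurableEmbedding f, hpre]

section lineMap

variable {E : Type*} [NormedAddCommGroup E] [NormedSpace ℝ E]

lemma setLIntegral_Icc_zero_one_lineMap_comm (f : E → ℝ≥0∞) (u v : E) :
    ∫⁻ t in Icc (0 : ℝ) 1, f (lineMap v u t) = ∫⁻ t in Icc (0 : ℝ) 1, f (lineMap u v t) := by
  simp_rw [← lineMap_apply_one_sub u v]
  exact setLIntegral_Icc_zero_one_comp_one_sub fun t => f (lineMap u v t)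

lemma ofReal_mul_le_lintegral_norm_lineMap_zpow (σ : ℤ) {u : E} (hu : u ≠ 0) (v : E) {δ : ℝ}
    (hδ : δ ≤ 1) (hδuv : δ * ‖v - u‖ ≤ ‖u‖ / 2) :
    ENNReal.ofReal ((2⁻¹ : ℝ) ^ σ.natAbs * ‖u‖ ^ σ * δ) ≤
      ∫⁻ t in Icc (0 : ℝ) 1, ENNReal.ofReal (‖lineMap u v t‖ ^ σ) := by
  have hnear : ∀ t ∈ Icc 0 δ, ‖lineMap u v t - u‖ ≤ ‖u‖ / 2 := fun t ⟨ht₀, htδ⟩ => by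
    rw [← dist_eq_norm, dist_lineMap_left, Real.norm_of_nonneg ht₀, dist_eq_norm, norm_sub_rev]
    exact (mul_le_mul_of_nonneg_right htδ (norm_nonneg _)).trans hδuv
  calc ENNReal.ofReal ((2⁻¹ : ℝ) ^ σ.natAbs * ‖u‖ ^ σ * δ)
      = ∫⁻ _ in Icc (0 : ℝ) δ, ENNReal.ofReal ((2⁻¹ : ℝ) ^ σ.natAbs * ‖u‖ ^ σ) := by
        rw [setLIntegral_const, Real.volume_Icc, sub_zero, ENNReal.ofReal_mul (by positivity)]
    _ ≤ ∫⁻ t in Icc (0 : ℝ) δ, ENNReal.ofReal (‖lineMap u v t‖ ^ σ) :=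
        setLIntegral_mono' measurableSet_Icc fun t ht => ENNReal.ofReal_le_ofReal
          (inv_two_pow_natAbs_mul_zpow_le hu (hnear t ht) σ)
    _ ≤ ∫⁻ t in Icc (0 : ℝ) 1, ENNReal.ofReal (‖lineMap u v t‖ ^ σ) :=
        lintegral_mono_set (Icc_subset_Icc_right hδ)

lemma ofReal_mul_rpow_mul_rpow_le_lintegral_norm_lineMap_zpow_of_nonneg {σ : ℤ} (hσ : 0 ≤ σ)
    {u v : E} (hv : v ≠ 0) (huv : ‖u‖ ≤ ‖v‖) :
    ENNReal.ofReal ((2⁻¹ : ℝ) ^ σ.natAbs / 4 * ‖u‖ ^ ((σ : ℝ) / 2) * ‖v‖ ^ ((σ : ℝ) / 2)) ≤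
      ∫⁻ t in Icc (0 : ℝ) 1, ENNReal.ofReal (‖lineMap u v t‖ ^ σ) := by
  have hv' : 0 < ‖v‖ := norm_pos_iff.2 hv
  have hsub : ‖u - v‖ ≤ 2 * ‖v‖ := (norm_sub_le u v).trans (by linarith)
  have hhalf : ‖v‖ ^ ((σ : ℝ) / 2) * ‖v‖ ^ ((σ : ℝ) / 2) = ‖v‖ ^ σ := by
    rw [← Real.rpow_add hv', add_halves, Real.rpow_intCast]
  refine le_trans (ENNReal.ofReal_le_ofReal ?_)
    ((ofReal_mul_le_lintegral_norm_lineMap_zpow σ hv u (δ := 1 / 4) (by norm_num)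
      (by linarith)).trans_eq
    (setLIntegral_Icc_zero_one_lineMap_comm (fun x => ENNReal.ofReal (‖x‖ ^ σ)) u v))
  calc (2⁻¹ : ℝ) ^ σ.natAbs / 4 * ‖u‖ ^ ((σ : ℝ) / 2) * ‖v‖ ^ ((σ : ℝ) / 2)
      ≤ (2⁻¹ : ℝ) ^ σ.natAbs / 4 * ‖v‖ ^ ((σ : ℝ) / 2) * ‖v‖ ^ ((σ : ℝ) / 2) := by
        gcongr
    _ = (2⁻¹ : ℝ) ^ σ.natAbs * ‖v‖ ^ σ * (1 / 4) := by rw [← hhalf]; ring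

lemma ofReal_mul_rpow_mul_rpow_le_lintegral_norm_lineMap_zpow_of_le_neg_two {σ : ℤ}
    (hσ : σ ≤ -2) {u v : E} (hu : u ≠ 0) (huv : ‖u‖ ≤ ‖v‖) :
    ENNReal.ofReal ((2⁻¹ : ℝ) ^ σ.natAbs / 4 * ‖u‖ ^ ((σ : ℝ) / 2) * ‖v‖ ^ ((σ : ℝ) / 2)) ≤
      ∫⁻ t in Icc (0 : ℝ) 1, ENNReal.ofReal (‖lineMap u v t‖ ^ σ) := by
  have hu' : 0 < ‖u‖ := norm_pos_iff.2 hu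
  have hv' : 0 < ‖v‖ := hu'.trans_le huv
  have hsub : ‖v - u‖ ≤ 2 * ‖v‖ := (norm_sub_le v u).trans (by linarith)
  have hσ₂ : (σ : ℝ) / 2 + 1 ≤ 0 := by
    have : (σ : ℝ) ≤ -2 := by exact_mod_cast hσ
    linarith
  have hu_pow : ‖u‖ ^ σ * ‖u‖ = ‖u‖ ^ ((σ : ℝ) / 2) * ‖u‖ ^ ((σ : ℝ) / 2 + 1) := by
    rw [← Real.rpow_add hu', ← Real.rpow_intCast, ← Real.rpow_add_one hu'.ne']; ring_nf
  have hv_pow : ‖v‖ ^ ((σ : ℝ) / 2) = ‖v‖ ^ ((σ : ℝ) / 2 + 1) / ‖v‖ := by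
    rw [Real.rpow_add_one hv'.ne', mul_div_cancel_right₀ _ hv'.ne']
  refine le_trans (ENNReal.ofReal_le_ofReal ?_)
    (ofReal_mul_le_lintegral_norm_lineMap_zpow σ hu v (δ := ‖u‖ / (4 * ‖v‖))
      (by rw [div_le_one (by positivity)]; linarith)
      (by rw [div_mul_eq_mul_div, div_le_div_iff₀ (by positivity) two_pos]; nlinarith))
  calc (2⁻¹ : ℝ) ^ σ.natAbs / 4 * ‖u‖ ^ ((σ : ℝ) / 2) * ‖v‖ ^ ((σ : ℝ) / 2)
      = (2⁻¹ : ℝ) ^ σ.natAbs / 4 * ‖u‖ ^ ((σ : ℝ) / 2) * ‖v‖ ^ ((σ : ℝ) / 2 + 1) / ‖v‖ := by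
        rw [hv_pow, mul_div_assoc]
    _ ≤ (2⁻¹ : ℝ) ^ σ.natAbs / 4 * ‖u‖ ^ ((σ : ℝ) / 2) * ‖u‖ ^ ((σ : ℝ) / 2 + 1) / ‖v‖ := by
        gcongr ?_ / _
        exact mul_le_mul_of_nonneg_left (Real.rpow_le_rpow_of_nonpos hu' huv hσ₂)
          (by positivity)
    _ = (2⁻¹ : ℝ) ^ σ.natAbs * ‖u‖ ^ σ * (‖u‖ / (4 * ‖v‖)) := by
        rw [mul_assoc _ (‖u‖ ^ ((σ : ℝ) / 2)), ← hu_pow]; field_simp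

theorem ofReal_mul_rpow_mul_rpow_le_lintegral_norm_lineMap_zpow {σ : ℤ} (hσ : σ ≠ -1) {u v : E}
    (hu : u ≠ 0) (hv : v ≠ 0) :
    ENNReal.ofReal ((2⁻¹ : ℝ) ^ σ.natAbs / 4 * ‖u‖ ^ ((σ : ℝ) / 2) * ‖v‖ ^ ((σ : ℝ) / 2)) ≤
      ∫⁻ t in Icc (0 : ℝ) 1, ENNReal.ofReal (‖lineMap u v t‖ ^ σ) := by
  wlog huv : ‖u‖ ≤ ‖v‖ generalizing u v
  · rw [mul_right_comm]
    exact (this hv hu (le_of_not_ge huv)).trans_eq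
      (setLIntegral_Icc_zero_one_lineMap_comm (fun x => ENNReal.ofReal (‖x‖ ^ σ)) u v)
  rcases le_or_gt 0 σ with hσ₀ | hσ₀
  · exact ofReal_mul_rpow_mul_rpow_le_lintegral_norm_lineMap_zpow_of_nonneg hσ₀ hv huv
  · exact ofReal_mul_rpow_mul_rpow_le_lintegral_norm_lineMap_zpow_of_le_neg_two (by omega) hu huv

end lineMap

/-- for every integer `σ ≠ -1`,
`∫₀¹ |w₁ + t(w₂-w₁) - b|^σ dt ≳ |w₁-b|^{σ/2} |w₂-b|^{σ/2}`, the left side interpreted as a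
value in `[0,∞]`. -/
theorem segment_power_integral_lower_bound (σ : ℤ) (hσ : σ ≠ -1) :
    ∃ c : ℝ, 0 < c ∧
      ∀ b w₁ w₂ : ℂ, w₁ ≠ b → w₂ ≠ b →
        ENNReal.ofReal (c * ‖w₁ - b‖ ^ ((σ : ℝ) / 2) *
            ‖w₂ - b‖ ^ ((σ : ℝ) / 2)) ≤
          ∫⁻ t in Set.Icc (0 : ℝ) 1,
            ENNReal.ofReal (‖w₁ + t • (w₂ - w₁) - b‖ ^ σ) := by
  refine ⟨2⁻¹ ^ σ.natAbs / 4, by positivity, fun b w₁ w₂ h₁ h₂ => ?_⟩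
  have hseg (t : ℝ) : w₁ + t • (w₂ - w₁) - b = lineMap (w₁ - b) (w₂ - b) t := by
    rw [lineMap_apply_module']; module
  simp_rw [hseg]
  exact ofReal_mul_rpow_mul_rpow_le_lintegral_norm_lineMap_zpow hσ
    (sub_ne_zero.2 h₁) (sub_ne_zero.2 h₂)
end

section
/- Let Γ(z) = (P₁(z), P₂(z), P₃(z)) with P₁, P₂, P₃ complex polynomials, and set L₁(z) = P₁'(z), L₂(z) = P₁'(z)P₂''(z) − P₂'(z)P₁''(z), and L₃(z) = det(Γ'(z), Γ''(z), Γ'''(z)). Let z₁, z₂, z₃ ∈ ℂ be such that L₁ and L₂ have no zeros on the closed convex hull of {z₁, z₂, z₃}. Then the complex Jacobian of the sum map Φ_Γ(z₁,z₂,z₃) = Γ(z₁)+Γ(z₂)+Γ(z₃) satisfies det(Γ'(z₁), Γ'(z₂), Γ'(z₃)) = L₁(z₁)L₁(z₂)L₁(z₃) · ∫_{z₁}^{z₂} ∫_{z₂}^{z₃} [L₂(w₁)L₂(w₂) / (L₁(w₁)² L₁(w₂)²)] · ( ∫_{w₁}^{w₂} L₁(y)L₃(y)/L₂(y)² dy )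 dw₂ dw₁, where each integral is the line integral along the straight segment between its endpoints. -/
open MeasureTheory Polynomial

noncomputable section

def pd (n : ℕ) (p : Polynomial ℂ) : Polynomial ℂ := (fun q => derivative q)^[n] p

def Lcurve (P : Fin 3 → Polynomial ℂ) (z : ℂ) : ℂ :=
  Matrix.det (Matrix.of fun i j : Fin 3 => (pd ((j : ℕ) + 1) (P i)).eval z)

def Jdet (P : Fin 3 → Polynomial ℂ) (z : Fin 3 → ℂ) : ℂ :=
  Matrix.det (Matrix.of fun i s : Fin 3 => (derivative (P i)).eval (z s))

/-- `L₁(z) = P₁'(z)`. -/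
def Lone (P : Fin 3 → Polynomial ℂ) (z : ℂ) : ℂ := (derivative (P 0)).eval z

/-- `L₂(z) = P₁'(z)P₂''(z) - P₂'(z)P₁''(z)`. -/
def Ltwo (P : Fin 3 → Polynomial ℂ) (z : ℂ) : ℂ :=
  (derivative (P 0) * derivative (derivative (P 1)) -
    derivative (P 1) * derivative (derivative (P 0))).eval z

/-- The line integral along the straight segment from `u` to `v`:
`∫_u^v f(y) dy = (v - u) ∫₀¹ f(u + t(v-u)) dt`. -/
def lineInt (f : ℂ → ℂ) (u v : ℂ) : ℂ :=
  (v - u) * ∫ t in (0 : ℝ)..1, f (u + t • (v - u))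

/-!
Write `a, b, c` for `P₁', P₂', P₃'` and `W(p, q) = p q' - p' q`, so that `L₁ = a` and
`L₂ = W(a, b)`. All three line integrals are integrals of quotient-rule derivatives
`W(q, p) / q² = (p / q)'`, hence evaluate to differences of `p / q`: the innermost one because
`W(W(a, b), W(a, c)) = a L₃`, with primitive `W(a, c) / W(a, b)`; the middle and outer ones because,
by bilinearity of `W`, their integrands are `W(a, g) / a²` for explicit linear combinations `g`
of `b` and `c`. The last evaluation is the cofactor expansion of the Jacobian along `a`.
-/

open Set

theorem add_smul_sub_mem_segment {u v : ℂ} {t : ℝ} (ht : t ∈ uIcc (0 : ℝ) 1) :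
    u + t • (v - u) ∈ segment ℝ u v := by
  rw [segment_eq_image']
  exact ⟨t, by simpa [uIcc_of_le zero_le_one] using ht, rfl⟩

theorem lineInt_eq_sub_of_hasDerivAt {f F : ℂ → ℂ} {u v : ℂ}
    (hF : ∀ y ∈ segment ℝ u v, HasDerivAt F (f y) y) (hf : ContinuousOn f (segment ℝ u v)) :
    lineInt f u v = F v - F u := by
  have hderiv : ∀ t ∈ uIcc (0 : ℝ) 1,
      HasDerivAt (fun s : ℝ => F (u + s • (v - u))) ((v - u) * f (u + t • (v - u))) t := by
    intro t ht
    have hline : HasDerivAt (fun s : ℝ => u + s • (v - u)) (v - u) t := by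
      simpa using ((hasDerivAt_id t).smul_const (v - u)).const_add u
    simpa [Function.comp_def, mul_comm] using (hF _ (add_smul_sub_mem_segment ht)).scomp t hline
  have hint : IntervalIntegrable (fun t : ℝ => (v - u) * f (u + t • (v - u))) volume 0 1 :=
    (continuousOn_const.mul
      (hf.comp (by fun_prop) fun _ => add_smul_sub_mem_segment)).intervalIntegrable
  have := intervalIntegral.integral_eq_sub_of_hasDerivAt hderiv hint
  rw [intervalIntegral.integral_const_mul] at this
  simpa [lineInt] using this

theorem lineInt_congr {f g : ℂ → ℂ} {u v : ℂ} (h : EqOn f g (segment ℝ u v)) :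
    lineInt f u v = lineInt g u v := by
  unfold lineInt
  congr 1
  exact intervalIntegral.integral_congr fun t ht => h (add_smul_sub_mem_segment ht)

theorem lineInt_wronskian_div_sq (p q : ℂ[X]) {u v : ℂ}
    (hq : ∀ y ∈ segment ℝ u v, q.eval y ≠ 0) :
    lineInt (fun y => (wronskian q p).eval y / q.eval y ^ 2) u v =
      p.eval v / q.eval v - p.eval u / q.eval u := by
  refine lineInt_eq_sub_of_hasDerivAt (F := fun y => p.eval y / q.eval y) (fun y hy => ?_) ?_
  · refine ((p.hasDerivAt y).fun_div (q.hasDerivAt y) (hq y hy)).congr_deriv ?_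
    simp only [wronskian, eval_sub, eval_mul]
    ring
  · exact (wronskian q p).continuousOn.div (q.continuousOn.pow 2) fun y hy =>
      pow_ne_zero 2 (hq y hy)

section Curve

variable (P : Fin 3 → ℂ[X])

theorem Ltwo_eq_eval_wronskian (z : ℂ) :
    Ltwo P z = (wronskian (derivative (P 0)) (derivative (P 1))).eval z := by
  simp only [Ltwo, wronskian, eval_sub, eval_mul]
  ring

theorem Lone_mul_Lcurve (z : ℂ) :
    Lone P z * Lcurve P z =
      (wronskian (wronskian (derivative (P 0)) (derivative (P 1)))
        (wronskian (derivative (P 0)) (derivative (P 2)))).eval z := by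
  simp only [Lone, Lcurve, Matrix.det_fin_three, Matrix.of_apply, Fin.val_zero, Fin.val_one,
    Fin.val_two, pd, Function.iterate_succ_apply', Function.iterate_zero_apply, wronskian,
    derivative_mul, derivative_sub, eval_sub, eval_mul, eval_add]
  ring

theorem lineInt_Lone_mul_Lcurve_div {w₁ w₂ : ℂ} (h : ∀ y ∈ segment ℝ w₁ w₂, Ltwo P y ≠ 0) :
    lineInt (fun y => Lone P y * Lcurve P y / Ltwo P y ^ 2) w₁ w₂ =
      (wronskian (derivative (P 0)) (derivative (P 2))).eval w₂ / Ltwo P w₂ -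
        (wronskian (derivative (P 0)) (derivative (P 2))).eval w₁ / Ltwo P w₁ := by
  simp only [Lone_mul_Lcurve, Ltwo_eq_eval_wronskian] at h ⊢
  exact lineInt_wronskian_div_sq _ _ h

theorem lineInt_Ltwo_mul_lineInt_Lcurve {K : Set ℂ} (hK : Convex ℝ K)
    (hL : ∀ w ∈ K, Lone P w ≠ 0 ∧ Ltwo P w ≠ 0) {w₁ z₂ z₃ : ℂ}
    (hw₁ : w₁ ∈ K) (hz₂ : z₂ ∈ K) (hz₃ : z₃ ∈ K) :
    lineInt (fun w₂ => Ltwo P w₁ * Ltwo P w₂ / (Lone P w₁ ^ 2 * Lone P w₂ ^ 2) *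
        lineInt (fun y => Lone P y * Lcurve P y / Ltwo P y ^ 2) w₁ w₂) z₂ z₃ =
      (Ltwo P w₁ *
          ((derivative (P 2)).eval z₃ / Lone P z₃ - (derivative (P 2)).eval z₂ / Lone P z₂) -
        (wronskian (derivative (P 0)) (derivative (P 2))).eval w₁ *
          ((derivative (P 1)).eval z₃ / Lone P z₃ - (derivative (P 1)).eval z₂ / Lone P z₂)) /
        Lone P w₁ ^ 2 := by
  set g := C (Ltwo P w₁ / Lone P w₁ ^ 2) * derivative (P 2) -
    C ((wronskian (derivative (P 0)) (derivative (P 2))).eval w₁ / Lone P w₁ ^ 2) *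
      derivative (P 1)
  have hseg := hK.segment_subset hz₂ hz₃
  obtain ⟨hL₁w₁, hL₂w₁⟩ := hL w₁ hw₁
  rw [lineInt_congr (g := fun w₂ => (wronskian (derivative (P 0)) g).eval w₂ /
      (derivative (P 0)).eval w₂ ^ 2),
    lineInt_wronskian_div_sq _ _ fun y hy => (hL y (hseg hy)).1]
  · simp only [g, Lone, eval_sub, eval_mul, eval_C] at hL₁w₁ ⊢
    field_simp
    ring
  · intro w₂ hw₂
    obtain ⟨hL₁w₂, hL₂w₂⟩ := hL w₂ (hseg hw₂)
    dsimp only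
    rw [lineInt_Lone_mul_Lcurve_div P fun y hy => (hL y (hK.segment_subset hw₁ (hseg hw₂) hy)).2]
    simp only [g, Lone, Ltwo_eq_eval_wronskian, wronskian, derivative_mul, derivative_sub,
      derivative_C, zero_mul, zero_add, eval_sub, eval_mul, eval_C] at hL₁w₁ hL₂w₁ hL₁w₂ hL₂w₂ ⊢
    field_simp
    ring

end Curve

/-- the complex Dendrinos–Wright integral representation of the Jacobian
`det(Γ'(z₁), Γ'(z₂), Γ'(z₃))`, valid when `L₁` and `L₂` have no zeros on the convex hull
of `{z₁, z₂, z₃}`. -/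
theorem jacobian_integral_representation (P : Fin 3 → Polynomial ℂ) (z₁ z₂ z₃ : ℂ)
    (hnz : ∀ w ∈ convexHull ℝ ({z₁, z₂, z₃} : Set ℂ), Lone P w ≠ 0 ∧ Ltwo P w ≠ 0) :
    Jdet P ![z₁, z₂, z₃] =
      Lone P z₁ * Lone P z₂ * Lone P z₃ *
        lineInt (fun w₁ =>
          lineInt (fun w₂ =>
            (Ltwo P w₁ * Ltwo P w₂) / ((Lone P w₁) ^ 2 * (Lone P w₂) ^ 2) *
              lineInt (fun y => Lone P y * Lcurve P y / (Ltwo P y) ^ 2) w₁ w₂) z₂ z₃) z₁ z₂ := by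
  have hK := convex_convexHull ℝ ({z₁, z₂, z₃} : Set ℂ)
  have hz₁ : z₁ ∈ convexHull ℝ ({z₁, z₂, z₃} : Set ℂ) := subset_convexHull ℝ _ (by simp)
  have hz₂ : z₂ ∈ convexHull ℝ ({z₁, z₂, z₃} : Set ℂ) := subset_convexHull ℝ _ (by simp)
  have hz₃ : z₃ ∈ convexHull ℝ ({z₁, z₂, z₃} : Set ℂ) := subset_convexHull ℝ _ (by simp)
  have hseg := hK.segment_subset hz₁ hz₂
  set h := C ((derivative (P 2)).eval z₃ / Lone P z₃ - (derivative (P 2)).eval z₂ / Lone P z₂) *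
      derivative (P 1) -
    C ((derivative (P 1)).eval z₃ / Lone P z₃ - (derivative (P 1)).eval z₂ / Lone P z₂) *
      derivative (P 2)
  rw [lineInt_congr (g := fun w₁ => (wronskian (derivative (P 0)) h).eval w₁ /
      (derivative (P 0)).eval w₁ ^ 2),
    lineInt_wronskian_div_sq _ _ fun y hy => (hnz y (hseg hy)).1]
  · have hL₁z₁ := (hnz z₁ hz₁).1
    have hL₁z₂ := (hnz z₂ hz₂).1
    have hL₁z₃ := (hnz z₃ hz₃).1
    simp only [Jdet, Matrix.det_fin_three, Matrix.of_apply, Matrix.cons_val_zero,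
      Matrix.cons_val_one, Matrix.cons_val, Lone, h, eval_sub, eval_mul, eval_C]
      at hL₁z₁ hL₁z₂ hL₁z₃ ⊢
    field_simp
    ring
  · intro w₁ hw₁
    dsimp only
    rw [lineInt_Ltwo_mul_lineInt_Lcurve P hK hnz (hseg hw₁) hz₂ hz₃]
    simp only [h, Lone, Ltwo_eq_eval_wronskian, wronskian, derivative_mul, derivative_sub,
      derivative_C, zero_mul, zero_add, eval_sub, eval_mul, eval_C]
    ring

end
end

section
/- For every integer d ≥ 1 and every ε ∈ (0, π/8] with 2π/ε ∈ ℕ, there exist an integer M = M(d, ε) and a constant C = C(d, ε) ≥ 1 with the following property: for every nonconstant complex polynomial Q of degree at most d, the plane ℂ can be covered by at most M convex sets B₁, …, B_M such that for each l there exist a root b_l of Q, an integer k_l with 1 ≤ k_l ≤ d, and a constant c_l > 0 with C^{-1} c_l |z − b_l|^{k_l} ≤ |Q(z)| ≤ C c_l |z − b_l|^{k_l} for all z ∈ B_l. -/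
/-!
Let `b` be a root of `Q` nearest to `z` and let `e` be the largest distance from `b` to a root
that is at most `‖z - b‖ / 2`. Writing `|Q(z)| = |a| ∏ ‖z - w‖` over the roots, every factor is
within a factor `3` of `‖z - b‖` when `‖b - w‖ ≤ e` (since `z` lies in the Voronoi cell of `b`
and `e ≤ ‖z - b‖`) and of `‖b - w‖` otherwise (since then `‖z - b‖ ≤ 2 ‖b - w‖`). Hence `|Q(z)|`
is comparable to `c ‖z - b‖ ^ k`, where `k` is the number of roots within `e` of `b`. These three
conditions on `z` cut out a convex set once `e ≤ ‖z - b‖` is strengthened to `e ≤ ⟪u, z - b⟫`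
for one of the four unit vectors `u = ±1, ±i`, one of which satisfies `‖z - b‖ / 2 ≤ ⟪u, z - b⟫`.
The pieces are indexed by the root `b`, the root realising `e`, and `u`: at most `4 d²` of them.
-/

open Polynomial

noncomputable section

namespace Multiset

variable {ι R : Type*}

theorem prod_map_le_pow_card_mul_prod_map [CommMonoidWithZero R] [PartialOrder R]
    [ZeroLEOneClass R] [PosMulMono R] {s : Multiset ι} {f g : ι → R} {K : R}
    (hf : ∀ i ∈ s, 0 ≤ f i) (h : ∀ i ∈ s, f i ≤ K * g i) :
    (s.map f).prod ≤ K ^ card s * (s.map g).prod := by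
  calc (s.map f).prod ≤ (s.map fun i => K * g i).prod := prod_map_le_prod_map₀ f _ hf h
    _ = K ^ card s * (s.map g).prod := by rw [prod_map_mul, map_const', prod_replicate]

theorem inv_pow_card_mul_prod_map_le [Field R] [LinearOrder R] [IsStrictOrderedRing R]
    {s : Multiset ι} {f g : ι → R} {K : R} (hK : 0 < K)
    (hg : ∀ i ∈ s, 0 ≤ g i) (h : ∀ i ∈ s, g i ≤ K * f i) :
    K⁻¹ ^ card s * (s.map g).prod ≤ (s.map f).prod := by
  rw [inv_pow, inv_mul_le_iff₀ (by positivity)]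
  exact prod_map_le_pow_card_mul_prod_map hg h

theorem prod_map_ite_const [CommMonoid R] (s : Multiset ι) (p : ι → Prop) [DecidablePred p]
    (x : R) (f : ι → R) :
    (s.map fun i => if p i then x else f i).prod =
      x ^ card (s.filter p) * ((s.filter fun i => ¬p i).map f).prod := by
  conv_lhs => rw [← filter_add_not p s, map_add, prod_add]
  rw [map_congr (g := fun _ => x) rfl fun i hi => if_pos (of_mem_filter hi),
    map_congr (g := f) rfl fun i hi => if_neg (of_mem_filter (p := fun i => ¬p i) hi),
    map_const', prod_replicate]

end Multiset

theorem Polynomial.norm_eval_eq_mul_prod_dist_roots {K : Type*} [NormedField K] [IsAlgClosed K]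
    (Q : K[X]) (z : K) : ‖Q.eval z‖ = ‖Q.leadingCoeff‖ * (Q.roots.map (dist z)).prod := by
  rw [(IsAlgClosed.splits Q).eval_eq_prod_roots, norm_mul]
  congr 1
  simpa [Function.comp_def, dist_eq_norm] using
    map_multiset_prod (normHom (α := K)) (Q.roots.map (z - ·))

theorem Finset.exists_fin_range_eq {α : Type*} {S : Finset α} (hS : S.Nonempty) {M : ℕ}
    (hM : S.card ≤ M) : ∃ B : Fin M → α, Set.range B = S := by
  obtain ⟨s₀, hs₀⟩ := hS
  refine ⟨fun l => S.toList.getD l s₀, Set.Subset.antisymm ?_ fun s hs => ?_⟩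
  · rintro _ ⟨l, rfl⟩
    change S.toList.getD l s₀ ∈ S
    by_cases hl : (l : ℕ) < S.toList.length
    · rw [List.getD_eq_getElem _ _ hl]
      exact mem_toList.1 (List.getElem_mem hl)
    · rwa [List.getD_eq_default _ _ (not_lt.1 hl)]
  · obtain ⟨n, hn, rfl⟩ := List.getElem_of_mem (mem_toList.2 hs)
    exact ⟨⟨n, hn.trans_le (by simpa using hM)⟩, List.getD_eq_getElem _ _ hn⟩

section InnerProductSpace

variable {E : Type*} [NormedAddCommGroup E] [InnerProductSpace ℝ E]

open RealInnerProductSpace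

theorem convex_setOf_dist_le_dist (a b : E) : Convex ℝ {z : E | dist z a ≤ dist z b} := by
  have : {z : E | dist z a ≤ dist z b} = {z | ⟪b - a, z⟫ ≤ (‖b‖ ^ 2 - ‖a‖ ^ 2) / 2} := by
    ext z
    simp only [Set.mem_ofPred_eq, dist_eq_norm, ← sq_le_sq₀ (norm_nonneg _) (norm_nonneg _),
      norm_sub_sq_real, inner_sub_left, real_inner_comm z]
    constructor <;> intro h <;> linarith
  rw [this]
  exact convex_halfSpace_le (innerₛₗ ℝ (b - a)).isLinear _

theorem convex_setOf_le_inner_sub (u b : E) (e : ℝ) : Convex ℝ {z : E | e ≤ ⟪u, z - b⟫} := by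
  have : {z : E | e ≤ ⟪u, z - b⟫} = {z | e + ⟪u, b⟫ ≤ ⟪u, z⟫} := by
    ext z
    simp only [Set.mem_ofPred_eq, inner_sub_right]
    constructor <;> intro h <;> linarith
  rw [this]
  exact convex_halfSpace_ge (innerₛₗ ℝ u).isLinear _

def voronoiCell (F : Finset E) (b : E) : Set E := {z | ∀ w ∈ F, dist z b ≤ dist z w}

theorem convex_voronoiCell (F : Finset E) (b : E) : Convex ℝ (voronoiCell F b) := by
  simpa only [voronoiCell, Set.ofPred_forall] using
    convex_iInter₂ fun w (_ : w ∈ F) => convex_setOf_dist_le_dist b w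

end InnerProductSpace

namespace PolynomialDecomposition

section Metric

variable {α : Type*} [PseudoMetricSpace α]

def modelDist (b : α) (e : ℝ) (z w : α) : ℝ := if dist b w ≤ e then dist z b else dist b w

theorem modelDist_nonneg (b : α) (e : ℝ) (z w : α) : 0 ≤ modelDist b e z w := by
  unfold modelDist
  split_ifs <;> exact dist_nonneg

theorem prod_map_modelDist (R : Multiset α) (b : α) (e : ℝ) (z : α) :
    (R.map (modelDist b e z)).prod = dist z b ^ Multiset.card (R.filter fun w => dist b w ≤ e) *
      ((R.filter fun w => ¬dist b w ≤ e).map (dist b)).prod :=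
  Multiset.prod_map_ite_const R _ _ _

end Metric

section InnerProductSpace

variable {E : Type*} [NormedAddCommGroup E] [InnerProductSpace ℝ E]

open RealInnerProductSpace

/-- The half-plane `e ≤ ⟪u, z - b⟫` stands in for the non-convex region `e ≤ ‖z - b‖`. -/
def piece (F : Finset E) (b : E) (e : ℝ) (u : E) : Set E :=
  voronoiCell F b ∩ {z | ∀ w ∈ F, e < dist b w → dist z b ≤ 2 * dist b w} ∩
    {z | e ≤ ⟪u, z - b⟫}

theorem convex_piece (F : Finset E) (b : E) (e : ℝ) (u : E) : Convex ℝ (piece F b e u) := by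
  refine ((convex_voronoiCell F b).inter ?_).inter (convex_setOf_le_inner_sub u b e)
  simpa only [Set.ofPred_forall, ← Metric.mem_closedBall, Set.ofPred_mem_eq] using
    convex_iInter₂ fun w (_ : w ∈ F) => convex_iInter fun (_ : e < dist b w) =>
      convex_closedBall b (2 * dist b w)

variable {F : Finset E} {b u z : E} {e : ℝ}

theorem modelDist_comparable_dist (hu : ‖u‖ ≤ 1) (hz : z ∈ piece F b e u) {w : E} (hw : w ∈ F) :
    modelDist b e z w ≤ 3 * dist z w ∧ dist z w ≤ 3 * modelDist b e z w := by
  obtain ⟨⟨hvor, hfar⟩, hhalf⟩ := hz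
  have hez : e ≤ dist z b := calc
    e ≤ ⟪u, z - b⟫ := hhalf
    _ ≤ ‖u‖ * ‖z - b‖ := real_inner_le_norm u (z - b)
    _ ≤ dist z b := by
      rw [dist_eq_norm]
      exact mul_le_of_le_one_left (norm_nonneg _) hu
  have hzw := hvor w hw
  have hzbw := dist_triangle z b w
  have hbzw := dist_triangle_left b w z
  unfold modelDist
  split_ifs with hbw
  · constructor <;> linarith
  · have := hfar w hw (not_le.1 hbw)
    constructor <;> linarith

theorem prod_dist_comparable {R : Multiset E} (hRF : ∀ w ∈ R, w ∈ F) (hu : ‖u‖ ≤ 1)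
    (hz : z ∈ piece F b e u) :
    (3 : ℝ)⁻¹ ^ R.card * (R.map (modelDist b e z)).prod ≤ (R.map (dist z)).prod ∧
      (R.map (dist z)).prod ≤ 3 ^ R.card * (R.map (modelDist b e z)).prod :=
  ⟨Multiset.inv_pow_card_mul_prod_map_le (by norm_num) (fun w _ => modelDist_nonneg b e z w)
      fun w hw => (modelDist_comparable_dist hu hz (hRF w hw)).1,
    Multiset.prod_map_le_pow_card_mul_prod_map (fun _ _ => dist_nonneg)
      fun w hw => (modelDist_comparable_dist hu hz (hRF w hw)).2⟩

end InnerProductSpace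

open RealInnerProductSpace Complex Finset

def axisDirections : Finset ℂ := {1, -1, I, -I}

theorem norm_of_mem_axisDirections {u : ℂ} (hu : u ∈ axisDirections) : ‖u‖ = 1 := by
  simp only [axisDirections, mem_insert, mem_singleton] at hu
  rcases hu with rfl | rfl | rfl | rfl <;> simp

theorem exists_mem_axisDirections_half_norm_le_inner (y : ℂ) :
    ∃ u ∈ axisDirections, ‖y‖ / 2 ≤ ⟪u, y⟫ := by
  have hy := norm_le_abs_re_add_abs_im y
  simp only [axisDirections, mem_insert, mem_singleton, Complex.inner, mul_re, conj_re, conj_im,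
    mul_neg, sub_neg_eq_add, exists_eq_or_imp, one_re, mul_one, one_im, mul_zero, add_zero, neg_re,
    neg_im, neg_zero, I_re, I_im, zero_add, ↓existsAndEq, true_and]
  by_contra! ⟨h₁, h₂, h₃, h₄⟩
  have hre : |y.re| < ‖y‖ / 2 := abs_lt.2 ⟨by linarith, h₁⟩
  have him : |y.im| < ‖y‖ / 2 := abs_lt.2 ⟨by linarith, h₃⟩
  linarith

theorem exists_mem_piece {F : Finset ℂ} (hF : F.Nonempty) (z : ℂ) :
    ∃ b ∈ F, ∃ w ∈ F, ∃ u ∈ axisDirections, z ∈ piece F b (dist b w) u := by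
  obtain ⟨b, hbF, hb⟩ := F.exists_min_image (dist z) hF
  obtain ⟨w, hw, hwmax⟩ := (F.filter fun w => dist b w ≤ dist z b / 2).exists_max_image (dist b)
    ⟨b, mem_filter.2 ⟨hbF, by rw [dist_self]; positivity⟩⟩
  obtain ⟨u, hu, hzu⟩ := exists_mem_axisDirections_half_norm_le_inner (z - b)
  rw [mem_filter] at hw
  refine ⟨b, hbF, w, hw.1, u, hu, ⟨⟨hb, fun v hv hwv => ?_⟩, ?_⟩⟩
  · by_contra! hvz
    linarith [hwmax v (mem_filter.2 ⟨hv, by linarith⟩)]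
  · rw [← dist_eq_norm] at hzu
    exact hw.2.trans hzu

theorem exists_fin_cover_piece {F : Finset ℂ} (hF : F.Nonempty) {M : ℕ}
    (hM : #F * #F * 4 ≤ M) :
    ∃ B : Fin M → Set ℂ, (⋃ l, B l) = Set.univ ∧
      ∀ l, ∃ b ∈ F, ∃ w ∈ F, ∃ u ∈ axisDirections, B l = piece F b (dist b w) u := by
  classical
  set S := (F ×ˢ F ×ˢ axisDirections).image fun p => piece F p.1 (dist p.1 p.2.1) p.2.2
  have hcover (z : ℂ) : ∃ s ∈ S, z ∈ s := by
    obtain ⟨b, hb, w, hw, u, hu, hz⟩ := exists_mem_piece hF z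
    exact ⟨_, mem_image.2 ⟨(b, w, u), mem_product.2 ⟨hb, mem_product.2 ⟨hw, hu⟩⟩, rfl⟩, hz⟩
  have hS : #S ≤ M := by
    refine card_image_le.trans (le_trans ?_ hM)
    rw [card_product, card_product, ← mul_assoc]
    gcongr
    exact card_le_four
  obtain ⟨B, hB⟩ := exists_fin_range_eq ((hcover 0).imp fun _ h => h.1) hS
  refine ⟨B, Set.eq_univ_of_forall fun z => ?_, fun l => ?_⟩
  · obtain ⟨s, hs, hz⟩ := hcover z
    obtain ⟨l, rfl⟩ : s ∈ Set.range B := hB ▸ hs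
    exact Set.mem_iUnion_of_mem l hz
  · obtain ⟨⟨b, w, u⟩, hp, hBl⟩ := mem_image.1 (hB ▸ Set.mem_range_self l : B l ∈ (S : Set _))
    simp only [mem_product] at hp
    exact ⟨b, hp.1, w, hp.2.1, u, hp.2.2, hBl.symm⟩

def ComparableToRootPower (Q : ℂ[X]) (d : ℕ) (C : ℝ) (s : Set ℂ) : Prop :=
  ∃ (b : ℂ) (k : ℕ) (c : ℝ), Q.IsRoot b ∧ 1 ≤ k ∧ k ≤ d ∧ 0 < c ∧
    ∀ z ∈ s, C⁻¹ * c * ‖z - b‖ ^ k ≤ ‖Q.eval z‖ ∧ ‖Q.eval z‖ ≤ C * c * ‖z - b‖ ^ k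

theorem ComparableToRootPower.mono {Q : ℂ[X]} {d d' : ℕ} {C C' : ℝ} {s : Set ℂ}
    (h : ComparableToRootPower Q d C s) (hd : d ≤ d') (hC : 0 < C) (hCC' : C ≤ C') :
    ComparableToRootPower Q d' C' s := by
  obtain ⟨b, k, c, hb, hk, hkd, hc, hbound⟩ := h
  refine ⟨b, k, c, hb, hk, hkd.trans hd, hc, fun z hz => ?_⟩
  obtain ⟨hlo, hhi⟩ := hbound z hz
  constructor
  · refine le_trans ?_ hlo
    gcongr
  · refine hhi.trans ?_
    gcongr

theorem comparableToRootPower_piece {Q : ℂ[X]} (hQ : Q ≠ 0) {b : ℂ} (hb : Q.IsRoot b) {e : ℝ}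
    (he : 0 ≤ e) {u : ℂ} (hu : ‖u‖ ≤ 1) :
    ComparableToRootPower Q Q.natDegree (3 ^ Q.natDegree) (piece Q.roots.toFinset b e u) := by
  set R := Q.roots
  set k := Multiset.card (R.filter fun w => dist b w ≤ e)
  set c := ((R.filter fun w => ¬dist b w ≤ e).map (dist b)).prod
  have hbR : b ∈ R := (mem_roots hQ).2 hb
  have hk : 1 ≤ k :=
    Multiset.card_pos_iff_exists_mem.2 ⟨b, Multiset.mem_filter.2 ⟨hbR, by simpa using he⟩⟩
  have hc : 0 < c := Multiset.prod_pos fun x hx => by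
    obtain ⟨w, hw, rfl⟩ := Multiset.mem_map.1 hx
    exact he.trans_lt (not_le.1 (Multiset.mem_filter.1 hw).2)
  have ha : 0 < ‖Q.leadingCoeff‖ := norm_pos_iff.2 (leadingCoeff_ne_zero.2 hQ)
  refine ⟨b, k, ‖Q.leadingCoeff‖ * c, hb, hk,
    (Multiset.card_le_card (Multiset.filter_le _ _)).trans (card_roots' Q), mul_pos ha hc,
    fun z hz => ?_⟩
  obtain ⟨hlo, hhi⟩ := prod_dist_comparable (fun w hw => Multiset.mem_toFinset.2 hw) hu hz
  rw [prod_map_modelDist, dist_eq_norm, IsAlgClosed.card_roots_eq_natDegree] at hlo hhi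
  rw [norm_eval_eq_mul_prod_dist_roots]
  constructor
  · calc (3 ^ Q.natDegree)⁻¹ * (‖Q.leadingCoeff‖ * c) * ‖z - b‖ ^ k
        = ‖Q.leadingCoeff‖ * (3⁻¹ ^ Q.natDegree * (‖z - b‖ ^ k * c)) := by rw [inv_pow]; ring
      _ ≤ ‖Q.leadingCoeff‖ * (R.map (dist z)).prod := by gcongr
  · calc ‖Q.leadingCoeff‖ * (R.map (dist z)).prod
        ≤ ‖Q.leadingCoeff‖ * (3 ^ Q.natDegree * (‖z - b‖ ^ k * c)) := by gcongr
      _ = 3 ^ Q.natDegree * (‖Q.leadingCoeff‖ * c) * ‖z - b‖ ^ k := by ring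

end PolynomialDecomposition

open PolynomialDecomposition in
theorem complex_polynomial_decomposition_general (d : ℕ) :
    ∃ (M : ℕ) (C : ℝ), 1 ≤ C ∧
      ∀ Q : Polynomial ℂ, Q.natDegree ≤ d → 0 < Q.natDegree →
        ∃ B : Fin M → Set ℂ, (⋃ l, B l) = Set.univ ∧
          ∀ l : Fin M, Convex ℝ (B l) ∧
            ∃ (b : ℂ) (k : ℕ) (c : ℝ), Q.IsRoot b ∧ 1 ≤ k ∧ k ≤ d ∧ 0 < c ∧
              ∀ z ∈ B l,
                C⁻¹ * c * ‖z - b‖ ^ k ≤ ‖Q.eval z‖ ∧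
                  ‖Q.eval z‖ ≤ C * c * ‖z - b‖ ^ k := by
  refine ⟨d * d * 4, 3 ^ d, one_le_pow₀ (by norm_num), fun Q hQd hQ0 => ?_⟩
  have hQ : Q ≠ 0 := ne_zero_of_natDegree_gt hQ0
  have hF : Q.roots.toFinset.Nonempty := by
    obtain ⟨b, hb⟩ := Complex.exists_root (natDegree_pos_iff_degree_pos.1 hQ0)
    exact ⟨b, Multiset.mem_toFinset.2 ((mem_roots hQ).2 hb)⟩
  have hFd : Q.roots.toFinset.card ≤ d :=
    (Multiset.toFinset_card_le _).trans ((card_roots' Q).trans hQd)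
  obtain ⟨B, hcover, hB⟩ := exists_fin_cover_piece (M := d * d * 4) hF (by gcongr)
  refine ⟨B, hcover, fun l => ?_⟩
  obtain ⟨b, hb, w, -, u, hu, hBl⟩ := hB l
  rw [hBl]
  exact ⟨convex_piece _ _ _ _,
    (comparableToRootPower_piece hQ ((mem_roots hQ).1 (Multiset.mem_toFinset.1 hb)) dist_nonneg
      (norm_of_mem_axisDirections hu).le).mono hQd (by positivity)
      (pow_le_pow_right₀ (by norm_num) hQd)⟩

/-- the complex decomposition D1: for any nonconstant polynomial `Q` of degree at
most `d`, the plane is covered by boundedly many convex sets on each of which `|Q|` is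
comparable to a constant multiple of a power of the distance to a single root of `Q`. -/
theorem complex_polynomial_decomposition (d : ℕ) (hd : 1 ≤ d) (ε : ℝ)
    (hε : ε ∈ Set.Ioc (0 : ℝ) (Real.pi / 8)) (hεdiv : ∃ m : ℕ, (m : ℝ) * ε = 2 * Real.pi) :
    ∃ (M : ℕ) (C : ℝ), 1 ≤ C ∧
      ∀ Q : Polynomial ℂ, Q.natDegree ≤ d → 0 < Q.natDegree →
        ∃ B : Fin M → Set ℂ, (⋃ l, B l) = Set.univ ∧
          ∀ l : Fin M, Convex ℝ (B l) ∧
            ∃ (b : ℂ) (k : ℕ) (c : ℝ), Q.IsRoot b ∧ 1 ≤ k ∧ k ≤ d ∧ 0 < c ∧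
              ∀ z ∈ B l,
                C⁻¹ * c * ‖z - b‖ ^ k ≤ ‖Q.eval z‖ ∧
                  ‖Q.eval z‖ ≤ C * c * ‖z - b‖ ^ k :=
  complex_polynomial_decomposition_general d

end
end
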